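/- arXiv:1407.7381 — 3 statements merged into one kernel-verified Lean document; each statement's English description precedes it below -/
import Mathlib

section
/- The space Q = span{q_{n,m} : m = 0, 1, ..., b_n} is D-invariant: for every s ∈ {1, ..., d} and every m ∈ {0, 1, ..., b_n}, the partial derivative ∂q_{n,m}/∂x_s lies in Q. -/
/-- The polynomial `q_{n,m}` from Theorem 2.2 (Li–Zhang):
`q_{n,m} = ∑_{τ(γ₁,…,γ_d)=m} (∏_{i,j} c_{i,j}^{γ_{i,j}}/γ_{i,j}!) · x₁^{|γ₁|} ⋯ x_d^{|γ_d|}`,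
where `τ(γ₁,…,γ_d) = ∑_j b_j ∑_i γ_{i,j}`.  Since every `b_j ≥ 1`, every solution of
`τ(γ) = m` satisfies `γ_{i,j} ≤ m`, so the sum below ranges over all solutions. -/
noncomputable def qPoly (d n : ℕ) (b : Fin n → ℕ) (c : Fin d → Fin n → ℝ) (m : ℕ) :
    MvPolynomial (Fin d) ℝ :=
  ∑ γ ∈ (Finset.Icc (0 : Fin d → Fin n → ℕ) fun _ _ => m).filter
      (fun γ => ∑ j, b j * ∑ i, γ i j = m),
    MvPolynomial.C (∏ i, ∏ j, c i j ^ γ i j / ((γ i j).factorial : ℝ)) *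
      ∏ i, MvPolynomial.X i ^ (∑ j, γ i j)

namespace QAux
open Finset MvPolynomial

variable {d n : ℕ}

def tau (b : Fin n → ℕ) (γ : Fin d → Fin n → ℕ) : ℕ := ∑ j, b j * ∑ i, γ i j

noncomputable def coefA (c : Fin d → Fin n → ℝ) (γ : Fin d → Fin n → ℕ) : ℝ :=
  ∏ i, ∏ j, c i j ^ γ i j / ((γ i j).factorial : ℝ)

noncomputable def nu (γ : Fin d → Fin n → ℕ) : Fin d →₀ ℕ :=
  Finsupp.equivFunOnFinite.symm fun i => ∑ j, γ i j

@[simp] lemma nu_apply (γ : Fin d → Fin n → ℕ) (i : Fin d) : nu γ i = ∑ j, γ i j := rfl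

def box (d n m : ℕ) : Finset (Fin d → Fin n → ℕ) := Finset.Icc 0 (fun _ _ => m)

lemma mem_box {m : ℕ} {γ : Fin d → Fin n → ℕ} : γ ∈ box d n m ↔ ∀ i j, γ i j ≤ m := by
  simp [box, Finset.mem_Icc, Pi.le_def]

lemma comp_le {b : Fin n → ℕ} (hb : ∀ j, 1 ≤ b j) {γ : Fin d → Fin n → ℕ} {m : ℕ}
    (h : tau b γ = m) (i : Fin d) (j : Fin n) : γ i j ≤ m := by
  have h1 : γ i j ≤ ∑ i', γ i' j :=
    Finset.single_le_sum (f := fun i' => γ i' j) (fun _ _ => Nat.zero_le _) (Finset.mem_univ i)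
  have h2 : ∑ i', γ i' j ≤ b j * ∑ i', γ i' j := Nat.le_mul_of_pos_left _ (hb j)
  have h3 : b j * ∑ i', γ i' j ≤ ∑ j', b j' * ∑ i', γ i' j' :=
    Finset.single_le_sum (f := fun j' => b j' * ∑ i', γ i' j') (fun _ _ => Nat.zero_le _) (Finset.mem_univ j)
  unfold tau at h; omega

lemma box_filter_eq {b : Fin n → ℕ} (hb : ∀ j, 1 ≤ b j) {k m : ℕ} (hkm : k ≤ m) :
    (box d n k).filter (fun γ => tau b γ = k) = (box d n m).filter (fun γ => tau b γ = k) := by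
  ext γ
  simp only [Finset.mem_filter, mem_box]
  constructor
  · rintro ⟨_, h⟩; exact ⟨fun i j => (comp_le hb h i j).trans hkm, h⟩
  · rintro ⟨_, h⟩; exact ⟨fun i j => comp_le hb h i j, h⟩


def addF (s : Fin d) (j : Fin n) (γ : Fin d → Fin n → ℕ) : Fin d → Fin n → ℕ :=
  fun i' j' => if i' = s ∧ j' = j then γ i' j' + 1 else γ i' j'

def subF (s : Fin d) (j : Fin n) (γ : Fin d → Fin n → ℕ) : Fin d → Fin n → ℕ :=
  fun i' j' => if i' = s ∧ j' = j then γ i' j' - 1 else γ i' j'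

lemma addF_apply (s : Fin d) (j : Fin n) (γ : Fin d → Fin n → ℕ) (i' : Fin d) (j' : Fin n) :
    addF s j γ i' j' = γ i' j' + (if i' = s ∧ j' = j then 1 else 0) := by
  unfold addF; split_ifs <;> simp

lemma addF_subF {s : Fin d} {j : Fin n} {γ : Fin d → Fin n → ℕ} (h : 1 ≤ γ s j) :
    addF s j (subF s j γ) = γ := by
  funext i' j'
  unfold addF subF
  by_cases hh : i' = s ∧ j' = j
  · obtain ⟨h1, h2⟩ := hh; subst h1; subst h2; simp; omega
  · simp [hh]

lemma subF_addF (s : Fin d) (j : Fin n) (γ : Fin d → Fin n → ℕ) :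
    subF s j (addF s j γ) = γ := by
  funext i' j'
  unfold addF subF
  split_ifs with h
  · simp [h]
  · simp [h]

lemma sum_col_addF (s : Fin d) (j : Fin n) (γ : Fin d → Fin n → ℕ) (j' : Fin n) :
    ∑ i, addF s j γ i j' = (∑ i, γ i j') + (if j' = j then 1 else 0) := by
  simp only [addF_apply, Finset.sum_add_distrib]
  congr 1
  by_cases h : j' = j
  · simp [h]
  · simp [h]

lemma sum_row_addF (s : Fin d) (j : Fin n) (γ : Fin d → Fin n → ℕ) (i : Fin d) :
    ∑ j', addF s j γ i j' = (∑ j', γ i j') + (if i = s then 1 else 0) := by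
  simp only [addF_apply, Finset.sum_add_distrib]
  congr 1
  by_cases h : i = s
  · simp [h]
  · simp [h]

lemma tau_addF (b : Fin n → ℕ) (s : Fin d) (j : Fin n) (γ : Fin d → Fin n → ℕ) :
    tau b (addF s j γ) = tau b γ + b j := by
  unfold tau
  simp only [sum_col_addF, mul_add, Finset.sum_add_distrib, mul_ite, mul_one, mul_zero]
  congr 1
  simp

lemma nu_addF_sub (s : Fin d) (j : Fin n) (γ : Fin d → Fin n → ℕ) :
    nu (addF s j γ) - Finsupp.single s 1 = nu γ := by
  ext i
  rw [Finsupp.tsub_apply]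
  simp only [nu_apply, sum_row_addF, Finsupp.single_apply]
  by_cases h : i = s
  · simp [h, eq_comm]
  · simp [h, Ne.symm h]

lemma factor_id (x : ℝ) (k : ℕ) :
    x ^ (k + 1) / ((k + 1).factorial : ℝ) * ((k : ℝ) + 1) = x * (x ^ k / (k.factorial : ℝ)) := by
  rw [Nat.factorial_succ, pow_succ]
  have h1 : (k.factorial : ℝ) ≠ 0 := Nat.cast_ne_zero.mpr (Nat.factorial_ne_zero k)
  have h2 : ((k : ℝ) + 1) ≠ 0 := by positivity
  push_cast
  field_simp

lemma coefA_addF (c : Fin d → Fin n → ℝ) (s : Fin d) (j : Fin n) (γ : Fin d → Fin n → ℕ) :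
    coefA c (addF s j γ) * ((γ s j : ℝ) + 1) = c s j * coefA c γ := by
  unfold coefA
  rw [← Fintype.prod_prod_type (f := fun p : Fin d × Fin n =>
        c p.1 p.2 ^ addF s j γ p.1 p.2 / ((addF s j γ p.1 p.2).factorial : ℝ)),
      ← Fintype.prod_prod_type (f := fun p : Fin d × Fin n =>
        c p.1 p.2 ^ γ p.1 p.2 / ((γ p.1 p.2).factorial : ℝ))]
  rw [← Finset.mul_prod_erase Finset.univ _ (Finset.mem_univ (s, j)),
      ← Finset.mul_prod_erase Finset.univ
        (fun p : Fin d × Fin n => c p.1 p.2 ^ γ p.1 p.2 / ((γ p.1 p.2).factorial : ℝ))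
        (Finset.mem_univ (s, j))]
  have hrest : ∏ p ∈ Finset.univ.erase (s, j),
      c p.1 p.2 ^ addF s j γ p.1 p.2 / ((addF s j γ p.1 p.2).factorial : ℝ)
      = ∏ p ∈ Finset.univ.erase (s, j),
      c p.1 p.2 ^ γ p.1 p.2 / ((γ p.1 p.2).factorial : ℝ) := by
    refine Finset.prod_congr rfl fun p hp => ?_
    have hne : ¬(p.1 = s ∧ p.2 = j) := by
      intro hh
      exact (Finset.mem_erase.mp hp).1 (Prod.ext hh.1 hh.2)
    simp [addF, hne]
  rw [hrest]
  have hsj : addF s j γ s j = γ s j + 1 := by simp [addF]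
  rw [hsj]
  have key := factor_id (c s j) (γ s j)
  linear_combination (∏ p ∈ Finset.univ.erase (s, j),
    c p.1 p.2 ^ γ p.1 p.2 / ((γ p.1 p.2).factorial : ℝ)) * key


lemma qPoly_eq (b : Fin n → ℕ) (c : Fin d → Fin n → ℝ) (m : ℕ) :
    qPoly d n b c m
      = ∑ γ ∈ (box d n m).filter (fun γ => tau b γ = m), monomial (nu γ) (coefA c γ) := by
  unfold qPoly box tau coefA
  refine Finset.sum_congr rfl fun γ _ => ?_
  rw [MvPolynomial.monomial_eq, Finsupp.prod_pow]
  rfl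

lemma pderiv_qPoly (b : Fin n → ℕ) (c : Fin d → Fin n → ℝ) (hb : ∀ j, 1 ≤ b j)
    (s : Fin d) (m : ℕ) :
    pderiv s (qPoly d n b c m)
      = ∑ j : Fin n, if b j ≤ m then C (c s j) * qPoly d n b c (m - b j) else 0 := by
  have hq : ∀ k, k ≤ m → qPoly d n b c k
      = ∑ γ ∈ (box d n m).filter (fun γ => tau b γ = k), monomial (nu γ) (coefA c γ) := by
    intro k hk
    rw [qPoly_eq, box_filter_eq hb hk]
  rw [hq m le_rfl, map_sum]
  have step1 : ∀ γ ∈ (box d n m).filter (fun γ => tau b γ = m),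
      pderiv s (monomial (nu γ) (coefA c γ))
        = ∑ j : Fin n, monomial (nu γ - Finsupp.single s 1) (coefA c γ * (γ s j : ℝ)) := by
    intro γ _
    rw [pderiv_monomial]
    have hcast : ((nu γ s : ℕ) : ℝ) = ∑ j, (γ s j : ℝ) := by
      rw [nu_apply]; push_cast; rfl
    rw [hcast, Finset.mul_sum, map_sum]
  rw [Finset.sum_congr rfl step1, ← Finset.sum_product']
  rw [← Finset.sum_filter_of_ne (p := fun p : (Fin d → Fin n → ℕ) × Fin n => p.1 s p.2 ≠ 0)
    (fun x _ hfx => by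
      intro h0
      apply hfx
      rw [h0]
      simp)]
  rw [Finset.sum_bij'
    (i := fun (p : (Fin d → Fin n → ℕ) × Fin n) _ => (p.2, subF s p.2 p.1))
    (j := fun (q : Fin n × (Fin d → Fin n → ℕ)) _ => (addF s q.1 q.2, q.1))
    (t := ((Finset.univ : Finset (Fin n)) ×ˢ box d n m).filter
      (fun q => tau b q.2 + b q.1 = m))
    (g := fun q => monomial (nu q.2) (c s q.1 * coefA c q.2))
    (hi := by
      rintro ⟨γ, j⟩ hp
      simp only [Finset.mem_filter, Finset.mem_product, mem_box] at hp ⊢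
      obtain ⟨⟨⟨hbox, htau⟩, -⟩, hpos⟩ := hp
      have h1 : 1 ≤ γ s j := Nat.one_le_iff_ne_zero.mpr hpos
      have htau' : tau b (subF s j γ) + b j = m := by
        have := tau_addF b s j (subF s j γ)
        rw [addF_subF h1] at this
        omega
      refine ⟨⟨Finset.mem_univ _, fun i' j' => ?_⟩, htau'⟩
      have : subF s j γ i' j' ≤ γ i' j' := by
        unfold subF; split_ifs <;> omega
      exact this.trans (hbox i' j')
    )
    (hj := by
      rintro ⟨j, γ'⟩ hq'
      simp only [Finset.mem_filter, Finset.mem_product, mem_box] at hq' ⊢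
      obtain ⟨⟨-, hbox⟩, htau⟩ := hq'
      have htau2 : tau b (addF s j γ') = m := by rw [tau_addF]; omega
      refine ⟨⟨⟨fun i' j' => comp_le hb htau2 i' j', htau2⟩, Finset.mem_univ _⟩, ?_⟩
      have : addF s j γ' s j = γ' s j + 1 := by simp [addF]
      omega
    )
    (by
      rintro ⟨γ, j⟩ hp
      simp only [Finset.mem_filter, Finset.mem_product, mem_box] at hp
      have h1 : 1 ≤ γ s j := Nat.one_le_iff_ne_zero.mpr hp.2
      exact Prod.ext (addF_subF h1) rfl)
    (by
      rintro ⟨j, γ'⟩ _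
      exact Prod.ext rfl (subF_addF s j γ'))
    (by
      rintro ⟨γ, j⟩ hp
      simp only [Finset.mem_filter, Finset.mem_product, mem_box] at hp
      have h1 : 1 ≤ γ s j := Nat.one_le_iff_ne_zero.mpr hp.2
      have hγ : addF s j (subF s j γ) = γ := addF_subF h1
      show monomial (nu γ - Finsupp.single s 1) (coefA c γ * (γ s j : ℝ))
          = monomial (nu (subF s j γ)) (c s j * coefA c (subF s j γ))
      conv_lhs => rw [← hγ]
      have haa : addF s j (subF s j γ) s j = subF s j γ s j + 1 := by simp [addF]
      rw [haa]
      push_cast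
      rw [nu_addF_sub, coefA_addF])]
  rw [Finset.sum_filter, Finset.sum_product]
  refine Finset.sum_congr rfl fun j _ => ?_
  by_cases hbj : b j ≤ m
  · rw [if_pos hbj, ← Finset.sum_filter]
    have hset : (box d n m).filter (fun γ' => tau b γ' + b j = m)
        = (box d n m).filter (fun γ' => tau b γ' = m - b j) := by
      ext γ'
      simp only [Finset.mem_filter]
      constructor
      · rintro ⟨h1, h2⟩; exact ⟨h1, by omega⟩
      · rintro ⟨h1, h2⟩; exact ⟨h1, by omega⟩
    rw [hset, hq (m - b j) (by omega), Finset.mul_sum]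
    exact Finset.sum_congr rfl fun γ' _ => (MvPolynomial.C_mul_monomial).symm
  · rw [if_neg hbj]
    exact Finset.sum_eq_zero fun γ' _ =>
      if_neg (show ¬(tau b γ' + b j = m) from by omega)


end QAux

/-- The space `Q = span{q_{n,m} : m = 0,…,b_n}` is `D`-invariant:
for every variable `x_s` and every `m ≤ b_n`, `∂q_{n,m}/∂x_s ∈ Q`. -/
theorem qPoly_span_D_invariant
    (d n : ℕ) (hd : 1 ≤ d) (hn : 1 ≤ n)
    (b : Fin n → ℕ) (c : Fin d → Fin n → ℝ)
    (hb1 : b ⟨0, hn⟩ = 1)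
    (hb2 : ∀ j : Fin n, 1 ≤ j.val → 2 ≤ b j)
    (hbmono : ∀ j j' : Fin n, 1 ≤ j.val → j.val < j'.val → b j < b j')
    (hc : ∃ i : Fin d, c i ⟨0, hn⟩ ≠ 0) :
    ∀ s : Fin d, ∀ m : ℕ, m ≤ b ⟨n - 1, by omega⟩ →
      MvPolynomial.pderiv s (qPoly d n b c m) ∈
        Submodule.span ℝ
          {p : MvPolynomial (Fin d) ℝ |
            ∃ m' : ℕ, m' ≤ b ⟨n - 1, by omega⟩ ∧ p = qPoly d n b c m'} := by
  intro s m hm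
  have hb : ∀ j, 1 ≤ b j := by
    intro j
    by_cases h : j.val = 0
    · have hj : j = ⟨0, hn⟩ := Fin.ext h
      rw [hj, hb1]
    · exact le_trans (by norm_num) (hb2 j (by omega))
  rw [QAux.pderiv_qPoly b c hb s m]
  refine Submodule.sum_mem _ fun j _ => ?_
  by_cases hbj : b j ≤ m
  · rw [if_pos hbj, ← MvPolynomial.smul_eq_C_mul]
    exact Submodule.smul_mem _ _
      (Submodule.subset_span ⟨m - b j, by omega, rfl⟩)
  · rw [if_neg hbj]
    exact Submodule.zero_mem _
end

section
/- The polynomials q_{n,0}, q_{n,1}, ..., q_{n,b_n} are linearly independent over ℝ; consequently the space Q = span{q_{n,m} : m = 0, 1, ..., b_n} has dimension b_n + 1. -/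
/-!
Substitute `x_i = c_{i,1} t`. Since every `b_j ≥ 1`, each `γ` with `τ(γ) = m` has
`∑ |γ_i| ≤ m`, so the image of `q_{n,m}` has degree at most `m`. If `∑ |γ_i| = m`, then
`b_j ≥ 2` for `j ≥ 2` forces `γ` to live in the first column, and the contribution of `γ` to the
coefficient of `t^m` becomes `∏_i c_{i,1}^{2γ_{i,1}} / γ_{i,1}!` ≥ 0; the choice
`γ_{i₀,1} = m` (with `c_{i₀,1} ≠ 0`) makes it positive. So the image of `q_{n,m}` has degree
exactly `m`, and polynomials of pairwise distinct degrees are linearly independent.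
-/

open MvPolynomial

variable {d n : ℕ} {b : Fin n → ℕ}

def qIndexSet (d : ℕ) (b : Fin n → ℕ) (m : ℕ) : Finset (Fin d → Fin n → ℕ) :=
  (Finset.Icc 0 fun _ _ => m).filter fun γ => ∑ j, b j * ∑ i, γ i j = m

noncomputable def qCoeff (c : Fin d → Fin n → ℝ) (γ : Fin d → Fin n → ℕ) : ℝ :=
  ∏ i, ∏ j, c i j ^ γ i j / ((γ i j).factorial : ℝ)

theorem qPoly_eq_sum_qIndexSet (c : Fin d → Fin n → ℝ) (m : ℕ) :
    qPoly d n b c m = ∑ γ ∈ qIndexSet d b m, C (qCoeff c γ) * ∏ i, X i ^ ∑ j, γ i j :=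
  rfl

theorem sum_sum_le_of_mem_qIndexSet (hb : ∀ j, 1 ≤ b j) {m : ℕ} {γ : Fin d → Fin n → ℕ}
    (hγ : γ ∈ qIndexSet d b m) : ∑ i, ∑ j, γ i j ≤ m := by
  rw [Finset.sum_comm, ← (Finset.mem_filter.mp hγ).2]
  exact Finset.sum_le_sum fun j _ => Nat.le_mul_of_pos_left _ (hb j)

theorem eq_zero_of_mem_qIndexSet_of_sum_sum_eq (hb : ∀ j, 1 ≤ b j) {m : ℕ}
    {γ : Fin d → Fin n → ℕ} (hγ : γ ∈ qIndexSet d b m) (hsum : ∑ i, ∑ j, γ i j = m)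
    {j : Fin n} (hbj : b j ≠ 1) (i : Fin d) : γ i j = 0 := by
  have hτ := (Finset.mem_filter.mp hγ).2
  rw [Finset.sum_comm] at hsum
  -- `∑ⱼ (b j - 1) sⱼ = τ(γ) - |γ| = 0` for the column sums `sⱼ = ∑ᵢ γ i j`
  have hexcess : ∑ j, (b j - 1) * ∑ i, γ i j = 0 := by
    have hsplit : ∀ j, b j * ∑ i, γ i j = ∑ i, γ i j + (b j - 1) * ∑ i, γ i j := fun j => by
      nth_rewrite 1 [← Nat.sub_add_cancel (hb j)]
      ring
    rw [Finset.sum_congr rfl fun j _ => hsplit j, Finset.sum_add_distrib, hsum] at hτ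
    omega
  have hexcess_j := Finset.sum_eq_zero_iff.mp hexcess j (Finset.mem_univ j)
  have hcol : ∑ i, γ i j = 0 :=
    (Nat.mul_eq_zero.mp hexcess_j).resolve_left (by have := hb j; omega)
  exact Finset.sum_eq_zero_iff.mp hcol i (Finset.mem_univ i)

theorem coeff_aeval_qPoly (c : Fin d → Fin n → ℝ) (a : Fin d → ℝ) (m k : ℕ) :
    (aeval (fun i => Polynomial.C (a i) * Polynomial.X) (qPoly d n b c m)).coeff k =
      ∑ γ ∈ qIndexSet d b m,
        if k = ∑ i, ∑ j, γ i j then qCoeff c γ * ∏ i, a i ^ ∑ j, γ i j else 0 := by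
  rw [qPoly_eq_sum_qIndexSet, map_sum, Polynomial.finsetSum_coeff]
  refine Finset.sum_congr rfl fun γ _ => ?_
  simp only [map_mul, map_prod, map_pow, aeval_C, aeval_X, mul_pow, Finset.prod_mul_distrib,
    Finset.prod_pow_eq_pow_sum, Polynomial.algebraMap_eq]
  simp only [← Polynomial.C_pow]
  rw [← map_prod Polynomial.C, ← mul_assoc, ← Polynomial.C_mul, Polynomial.coeff_C_mul_X_pow]

theorem degree_aeval_qPoly_le (hb : ∀ j, 1 ≤ b j) (c : Fin d → Fin n → ℝ) (a : Fin d → ℝ)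
    (m : ℕ) :
    (aeval (fun i => Polynomial.C (a i) * Polynomial.X) (qPoly d n b c m)).degree ≤
      (m : WithBot ℕ) := by
  refine Polynomial.degree_le_iff_coeff_zero _ _ |>.mpr fun k hk => ?_
  rw [coeff_aeval_qPoly]
  refine Finset.sum_eq_zero fun γ hγ => if_neg ?_
  have hle := sum_sum_le_of_mem_qIndexSet hb hγ
  have hlt : m < k := by exact_mod_cast hk
  omega

theorem qCoeff_mul_prod_eq_of_forall_ne_eq_zero {c : Fin d → Fin n → ℝ} {γ : Fin d → Fin n → ℕ}
    {j₀ : Fin n} (hγ : ∀ i, ∀ j ≠ j₀, γ i j = 0) :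
    qCoeff c γ * ∏ i, c i j₀ ^ ∑ j, γ i j = ∏ i, (c i j₀ ^ 2) ^ γ i j₀ / (γ i j₀).factorial := by
  have hrow : ∀ i, ∑ j, γ i j = γ i j₀ := fun i => Fintype.sum_eq_single j₀ (hγ i)
  have hprod : ∀ i, ∏ j, c i j ^ γ i j / ((γ i j).factorial : ℝ) =
      c i j₀ ^ γ i j₀ / (γ i j₀).factorial := fun i =>
    Fintype.prod_eq_single j₀ fun j hj => by simp [hγ i j hj]
  simp only [qCoeff, hrow, hprod, ← Finset.prod_mul_distrib]
  refine Finset.prod_congr rfl fun i _ => ?_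
  rw [div_mul_eq_mul_div, ← pow_add, ← two_mul, pow_mul, sq]

theorem single_single_mem_qIndexSet {j₀ : Fin n} (hb₀ : b j₀ = 1) (i₀ : Fin d) (m : ℕ) :
    Pi.single i₀ (Pi.single j₀ m) ∈ qIndexSet d b m := by
  refine Finset.mem_filter.mpr ⟨Finset.mem_Icc.mpr ⟨fun _ _ => Nat.zero_le _, fun i j => ?_⟩, ?_⟩
  · by_cases hi : i = i₀ <;> by_cases hj : j = j₀ <;> simp [hi, hj]
  · simp only [← Finset.sum_apply, Finset.sum_pi_single', Finset.mem_univ, if_true]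
    simp [Pi.single_apply, hb₀]

theorem one_le_apply_of_eq_one_of_two_le {j₀ : Fin n} (hb₀ : b j₀ = 1)
    (hb : ∀ j ≠ j₀, 2 ≤ b j) (j : Fin n) : 1 ≤ b j := by
  by_cases hj : j = j₀
  · exact hj ▸ hb₀.ge
  · exact (hb j hj).trans' one_le_two

theorem coeff_aeval_qPoly_self_pos {j₀ : Fin n} (hb₀ : b j₀ = 1) (hb : ∀ j ≠ j₀, 2 ≤ b j)
    {c : Fin d → Fin n → ℝ} {i₀ : Fin d} (hc : c i₀ j₀ ≠ 0) (m : ℕ) :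
    0 < (aeval (fun i => Polynomial.C (c i j₀) * Polynomial.X) (qPoly d n b c m)).coeff m := by
  have hb₁ := one_le_apply_of_eq_one_of_two_le hb₀ hb
  rw [coeff_aeval_qPoly]
  refine Finset.sum_pos' (fun γ hγ => ?_) ⟨_, single_single_mem_qIndexSet hb₀ i₀ m, ?_⟩
  · split_ifs with hsum
    · have hcol : ∀ i, ∀ j ≠ j₀, γ i j = 0 := fun i j hj =>
        eq_zero_of_mem_qIndexSet_of_sum_sum_eq hb₁ hγ hsum.symm (by have := hb j hj; omega) i
      rw [qCoeff_mul_prod_eq_of_forall_ne_eq_zero hcol]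
      positivity
    · exact le_rfl
  · set γ₀ : Fin d → Fin n → ℕ := Pi.single i₀ (Pi.single j₀ m)
    have hcol : ∀ i, ∀ j ≠ j₀, γ₀ i j = 0 := fun i j hj => by
      by_cases hi : i = i₀ <;> simp [γ₀, hi, hj]
    have hsum : m = ∑ i, ∑ j, γ₀ i j := by
      rw [Fintype.sum_eq_single i₀ fun i hi => by simp [γ₀, hi]]
      simp [γ₀]
    rw [if_pos hsum, qCoeff_mul_prod_eq_of_forall_ne_eq_zero hcol]
    refine Finset.prod_pos fun i _ => ?_
    by_cases hi : i = i₀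
    · subst hi
      simp only [γ₀, Pi.single_eq_same]
      positivity
    · simp [γ₀, hi]

theorem linearIndependent_qPoly {j₀ : Fin n} (hb₀ : b j₀ = 1) (hb : ∀ j ≠ j₀, 2 ≤ b j)
    {c : Fin d → Fin n → ℝ} (hc : ∃ i, c i j₀ ≠ 0) :
    LinearIndependent ℝ (qPoly d n b c) := by
  obtain ⟨i₀, hi₀⟩ := hc
  let φ := aeval (R := ℝ) fun i => Polynomial.C (c i j₀) * Polynomial.X
  let S : Polynomial.Sequence ℝ :=
    { elems' := fun m => φ (qPoly d n b c m)
      degree_eq' := fun m => Polynomial.degree_eq_of_le_of_coeff_ne_zero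
        (degree_aeval_qPoly_le (one_le_apply_of_eq_one_of_two_le hb₀ hb) c _ m)
        (coeff_aeval_qPoly_self_pos hb₀ hb hi₀ m).ne' }
  exact LinearIndependent.of_comp φ.toLinearMap S.linearIndependent

/-- The polynomials `q_{n,0}, …, q_{n,b_n}` are linearly independent over `ℝ`;
consequently `Q = span{q_{n,m} : m = 0,…,b_n}` has dimension `b_n + 1`. -/
theorem qPoly_linearIndependent_and_finrank
    (d n : ℕ) (hn : 1 ≤ n)
    (b : Fin n → ℕ) (c : Fin d → Fin n → ℝ)
    (hb1 : b ⟨0, hn⟩ = 1)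
    (hb2 : ∀ j : Fin n, 1 ≤ j.val → 2 ≤ b j)
    (hc : ∃ i : Fin d, c i ⟨0, hn⟩ ≠ 0) :
    LinearIndependent ℝ
      (fun m : Fin (b ⟨n - 1, by omega⟩ + 1) => qPoly d n b c m.val) ∧
    Module.finrank ℝ
      (Submodule.span ℝ
        (Set.range (fun m : Fin (b ⟨n - 1, by omega⟩ + 1) => qPoly d n b c m.val)))
      = b ⟨n - 1, by omega⟩ + 1 := by
  have hb : ∀ j ≠ ⟨0, hn⟩, 2 ≤ b j := fun j hj =>
    hb2 j (Nat.one_le_iff_ne_zero.mpr fun h => hj (Fin.ext h))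
  have hli : LinearIndependent ℝ fun m : Fin (b ⟨n - 1, by omega⟩ + 1) => qPoly d n b c m :=
    (linearIndependent_qPoly hb1 hb hc).comp _ Fin.val_injective
  exact ⟨hli, by rw [finrank_span_eq_card hli, Fintype.card_fin]⟩
end

section
/- The explicitly defined polynomials L_0, L_1, ..., L_n satisfy the derivative recursions of the breadth-one basis: (a) ∂L_k/∂x_1 = L_{k-1} for every k ∈ {1, ..., n}; and (b) for every s ∈ {2, ..., d} and every k ∈ {0, ..., n}, ∂L_k/∂x_s = ∑_{i=2}^{k} a_{i,s} L_{k-i} (an empty sum, i.e. 0, when k ≤ 1). -/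
/-- The explicit breadth-one basis polynomial `L_k` (Corollary 3.4):
`L_k = ∑ (1/γ₁!) (∏_{s=2}^d ∏_{j=2}^n a_{j,s}^{γ_{s,j}}/γ_{s,j}!) x₁^{γ₁} ∏_{s=2}^d x_s^{|γ_s|}`,
the sum being over `γ₁ ∈ ℕ` and `γ_{s,j} ∈ ℕ` with `γ₁ + ∑_{s,j} j·γ_{s,j} = k`.
Variables `x₁,…,x_d` are the coordinates `0,…,d-1` of `Fin d`; the index `s : Fin (d-1)`
stands for the variable `x_{s+2}` and `j : Fin (n-1)` for the degree weight `j+2`. -/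
noncomputable def Lpoly (d n : ℕ) (hd : 1 ≤ d) (a : ℕ → ℕ → ℝ) (k : ℕ) :
    MvPolynomial (Fin d) ℝ :=
  ∑ g1 ∈ Finset.range (k + 1),
    ∑ g ∈ (Finset.Icc (0 : Fin (d - 1) → Fin (n - 1) → ℕ) fun _ _ => k).filter
        (fun g => g1 + ∑ s, ∑ j, (j.val + 2) * g s j = k),
      MvPolynomial.C ((1 / (g1.factorial : ℝ)) *
          ∏ s, ∏ j, a (j.val + 2) (s.val + 2) ^ g s j / ((g s j).factorial : ℝ)) *
        MvPolynomial.X (⟨0, hd⟩ : Fin d) ^ g1 *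
        ∏ s : Fin (d - 1),
          MvPolynomial.X (⟨s.val + 1, by have := s.isLt; omega⟩ : Fin d) ^ (∑ j, g s j)

/-!
`L_k` is the coefficient of `t ^ k` in `exp (x₁ t) * ∏_{s,j} exp (a_{j,s} x_s t ^ j)`, and
differentiating this generating function in `x_s` multiplies it by `∑_j a_{j,s} t ^ j` (by `t` for
`x₁`). On coefficients this is a reindexing: the derivative in `x` of the monomial with exponent
tuple `g` is the sum of `c i` times the monomial of `g - eᵢ` over the indices `i` of `x` with
`g i ≠ 0`, and `g ↦ g - eᵢ` is a bijection from the tuples of weight `k` with `g i ≠ 0` onto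
those of weight `k - w i`.
-/

open MvPolynomial Finset

section WeightedTuples

variable {ι : Type*} [DecidableEq ι] {w : ι → ℕ} {k : ℕ} {g : ι → ℕ} {i : ι}

lemma sub_single_add_single (hg : g i ≠ 0) : g - Pi.single i 1 + Pi.single i 1 = g := by
  ext j
  rcases eq_or_ne j i with rfl | hj <;> simp [*]
  omega

variable [Fintype ι]

omit [DecidableEq ι] in
lemma mul_le_sum_mul (w g : ι → ℕ) (i : ι) : w i * g i ≤ ∑ j, w j * g j :=
  single_le_sum (f := fun j => w j * g j) (fun _ _ => Nat.zero_le _) (mem_univ i)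

def weightedTuples (w : ι → ℕ) (k : ℕ) : Finset (ι → ℕ) :=
  (Icc 0 fun _ => k).filter fun g => ∑ i, w i * g i = k

lemma sum_mul_add_single (w h : ι → ℕ) (i : ι) :
    ∑ j, w j * (h + Pi.single i 1 : ι → ℕ) j = ∑ j, w j * h j + w i := by
  simp [mul_add, sum_add_distrib, Pi.single_apply]

lemma mem_weightedTuples (hw : ∀ i, 0 < w i) : g ∈ weightedTuples w k ↔ ∑ i, w i * g i = k := by
  refine ⟨fun h => (mem_filter.1 h).2,
    fun h => mem_filter.2 ⟨mem_Icc.2 ⟨fun _ => Nat.zero_le _, fun i => ?_⟩, h⟩⟩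
  calc g i ≤ w i * g i := Nat.le_mul_of_pos_left _ (hw i)
    _ ≤ k := h ▸ mul_le_sum_mul w g i

lemma eq_zero_of_mem_weightedTuples (hk : k < w i) (hg : g ∈ weightedTuples w k) : g i = 0 := by
  have hle : w i * g i ≤ k := (mul_le_sum_mul w g i).trans_eq (mem_filter.1 hg).2
  by_contra h
  have := Nat.le_mul_of_pos_right (w i) (Nat.pos_of_ne_zero h)
  omega

lemma sum_weightedTuples_sub_single {M : Type*} [AddCommMonoid M] (hw : ∀ i, 0 < w i)
    (hi : w i ≤ k) (f : (ι → ℕ) → M) :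
    ∑ g ∈ weightedTuples w k with g i ≠ 0, f (g - Pi.single i 1) =
      ∑ h ∈ weightedTuples w (k - w i), f h := by
  refine sum_nbij' (· - Pi.single i 1) (· + Pi.single i 1) ?_ ?_ ?_ ?_ fun _ _ => rfl
  · intro g hg
    simp only [mem_filter, mem_weightedTuples hw] at hg ⊢
    have hsum := sum_mul_add_single w (g - Pi.single i 1) i
    rw [sub_single_add_single hg.2] at hsum
    omega
  · intro h hh
    have hsum := sum_mul_add_single w h i
    simp only [mem_filter, mem_weightedTuples hw, Pi.add_apply, Pi.single_eq_same] at hh hsum ⊢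
    omega
  · intro g hg
    exact sub_single_add_single (mem_filter.1 hg).2
  · intro h _
    exact add_tsub_cancel_right h _

end WeightedTuples

section ExpPoly

variable {ι σ K : Type*} [Fintype ι] [Field K]

noncomputable def expMonomial (c : ι → K) (v : ι → σ) (g : ι → ℕ) : MvPolynomial σ K :=
  monomial (∑ i, Finsupp.single (v i) (g i)) (∏ i, c i ^ g i / (g i).factorial)

lemma expMonomial_eq_prod (c : ι → K) (v : ι → σ) (g : ι → ℕ) :
    expMonomial c v g = ∏ i, C (c i ^ g i / (g i).factorial) * X (v i) ^ g i := by
  simp only [expMonomial, monomial_sum_prod, C_mul_X_pow_eq_monomial]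

variable [DecidableEq ι]

/-- The coefficient of `t ^ k` in `∏ i, exp (c i * X (v i) * t ^ w i)`. -/
noncomputable def expPoly (w : ι → ℕ) (c : ι → K) (v : ι → σ) (k : ℕ) : MvPolynomial σ K :=
  ∑ g ∈ weightedTuples w k, expMonomial c v g

variable [CharZero K]

lemma pow_div_factorial_succ_mul (x : K) (m : ℕ) :
    x ^ (m + 1) / (m + 1).factorial * (m + 1) = x * (x ^ m / m.factorial) := by
  rw [Nat.factorial_succ]
  push_cast
  field_simp
  ring

lemma prod_pow_div_factorial_add_single (c : ι → K) (h : ι → ℕ) (i : ι) :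
    (∏ j, c j ^ (h + Pi.single i 1 : ι → ℕ) j / ((h + Pi.single i 1 : ι → ℕ) j).factorial) *
        (h i + 1) = c i * ∏ j, c j ^ h j / (h j).factorial := by
  rw [Fintype.prod_eq_mul_prod_compl i, Fintype.prod_eq_mul_prod_compl i (fun j => c j ^ h j / _)]
  have hrest : ∏ j ∈ {i}ᶜ,
        c j ^ (h + Pi.single i 1 : ι → ℕ) j / ((h + Pi.single i 1 : ι → ℕ) j).factorial
      = ∏ j ∈ {i}ᶜ, c j ^ h j / (h j).factorial :=
    prod_congr rfl fun j hj => by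
      rw [Pi.add_apply, Pi.single_eq_of_ne (by simpa using hj), add_zero]
  rw [hrest, Pi.add_apply, Pi.single_eq_same, mul_right_comm, pow_div_factorial_succ_mul,
    mul_assoc]

lemma sum_single_add_single (v : ι → σ) (h : ι → ℕ) (i : ι) :
    ∑ j, Finsupp.single (v j) ((h + Pi.single i 1 : ι → ℕ) j) =
      ∑ j, Finsupp.single (v j) (h j) + Finsupp.single (v i) 1 := by
  simp only [Pi.add_apply, Finsupp.single_add, sum_add_distrib]
  congr 1
  rw [Fintype.sum_eq_single i fun j hj => by rw [Pi.single_eq_of_ne hj, Finsupp.single_zero],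
    Pi.single_eq_same]

lemma pderiv_expMonomial [DecidableEq σ] (c : ι → K) (v : ι → σ) (g : ι → ℕ) (x : σ) :
    pderiv x (expMonomial c v g) =
      ∑ i with v i = x ∧ g i ≠ 0, c i • expMonomial c v (g - Pi.single i 1) := by
  rw [expMonomial, pderiv_monomial, Finsupp.finsetSum_apply, Nat.cast_sum, mul_sum, map_sum,
    sum_filter]
  refine sum_congr rfl fun i _ => ?_
  rw [Finsupp.single_apply]
  by_cases hx : v i = x
  · by_cases hg : g i = 0
    · simp [hg]
    obtain ⟨h, rfl⟩ : ∃ h, g = h + Pi.single i 1 :=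
      ⟨g - Pi.single i 1, (sub_single_add_single hg).symm⟩
    rw [if_pos hx, if_pos ⟨hx, hg⟩, expMonomial, smul_monomial, add_tsub_cancel_right,
      sum_single_add_single, hx, add_tsub_cancel_right, smul_eq_mul,
      ← prod_pow_div_factorial_add_single]
    simp
  · simp [hx]

theorem pderiv_expPoly [DecidableEq σ] {w : ι → ℕ} (hw : ∀ i, 0 < w i) (c : ι → K) (v : ι → σ)
    (x : σ) (k : ℕ) :
    pderiv x (expPoly w c v k) = ∑ i with v i = x ∧ w i ≤ k, c i • expPoly w c v (k - w i) := by
  have hshift : ∀ i, ∑ g ∈ weightedTuples w k with g i ≠ 0, expMonomial c v (g - Pi.single i 1) =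
      if w i ≤ k then expPoly w c v (k - w i) else 0 := by
    intro i
    split_ifs with hi
    · exact sum_weightedTuples_sub_single hw hi _
    · rw [filter_false_of_mem fun g hg =>
        not_not.2 (eq_zero_of_mem_weightedTuples (not_le.1 hi) hg), sum_empty]
  calc pderiv x (expPoly w c v k)
      = ∑ g ∈ weightedTuples w k, ∑ i with v i = x,
          if g i ≠ 0 then c i • expMonomial c v (g - Pi.single i 1) else 0 := by
        simp only [expPoly, map_sum, pderiv_expMonomial, ← filter_filter, sum_filter]
    _ = ∑ i with v i = x,
          c i • ∑ g ∈ weightedTuples w k with g i ≠ 0, expMonomial c v (g - Pi.single i 1) := by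
        rw [sum_comm]
        simp only [smul_sum, sum_filter, smul_ite, smul_zero]
    _ = ∑ i with v i = x ∧ w i ≤ k, c i • expPoly w c v (k - w i) := by
        simp only [hshift, smul_ite, smul_zero, ← filter_filter, sum_filter]

end ExpPoly

lemma sum_Icc_two_eq_sum_fin {M : Type*} [AddCommMonoid M] {n k : ℕ} (hk : k ≤ n) (f : ℕ → M) :
    ∑ i ∈ Icc 2 k, f i = ∑ j : Fin (n - 1) with j.val + 2 ≤ k, f (j.val + 2) := by
  symm
  refine sum_bij (fun j _ => j.val + 2) (fun j hj => ?_) (fun j _ j' _ h => ?_) (fun i hi => ?_)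
    fun _ _ => rfl
  · simp only [mem_filter, mem_Icc] at hj ⊢
    omega
  · exact Fin.ext (by omega)
  · rw [mem_Icc] at hi
    exact ⟨⟨i - 2, by omega⟩, by simp only [mem_filter, mem_univ, true_and]; omega,
      by simp only; omega⟩

namespace Lpoly

/-! The index `none` stands for the factor `exp (x₁ t)`, and `some (s, j)` for
`exp (a_{j+2,s+2} x_{s+2} t ^ (j+2))`. -/

variable (d n : ℕ)

def weight : Option (Fin (d - 1) × Fin (n - 1)) → ℕ := fun o => o.elim 1 fun p => p.2 + 2

def coeff (a : ℕ → ℕ → ℝ) : Option (Fin (d - 1) × Fin (n - 1)) → ℝ :=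
  fun o => o.elim 1 fun p => a (p.2 + 2) (p.1 + 2)

def var (hd : 1 ≤ d) : Option (Fin (d - 1) × Fin (n - 1)) → Fin d :=
  fun o => o.elim ⟨0, hd⟩ fun p => ⟨p.1 + 1, by omega⟩

lemma eq_expPoly (hd : 1 ≤ d) (a : ℕ → ℕ → ℝ) (k : ℕ) :
    Lpoly d n hd a k = expPoly (weight d n) (coeff d n a) (var d n hd) k := by
  rw [Lpoly, sum_sigma', expPoly]
  refine sum_nbij' (fun x o => o.elim x.1 fun p => x.2 p.1 p.2)
    (fun g => ⟨g none, fun s j => g (some (s, j))⟩) ?_ ?_ ?_ ?_ ?_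
  · rintro ⟨g1, g⟩ hg
    simpa [weightedTuples, Fintype.sum_option, Fintype.sum_prod_type, weight, Pi.le_def,
      Option.forall, and_assoc] using hg
  · intro g hg
    simpa [weightedTuples, Fintype.sum_option, Fintype.sum_prod_type, weight, Pi.le_def,
      Option.forall, and_assoc] using hg
  · intro _ _
    rfl
  · intro g _
    funext o
    cases o <;> rfl
  · rintro ⟨g1, g⟩ -
    simp only [expMonomial_eq_prod, Fintype.prod_option, Fintype.prod_prod_type, coeff, var,
      Option.elim, map_mul, map_prod, prod_mul_distrib, ← prod_pow_eq_pow_sum, one_pow]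
    ring

variable {d n}

lemma weight_pos (o : Option (Fin (d - 1) × Fin (n - 1))) : 0 < weight d n o := by
  cases o <;> simp [weight]

lemma pderiv_coord_zero (hd : 1 ≤ d) (a : ℕ → ℕ → ℝ) {k : ℕ} (hk : 1 ≤ k) :
    pderiv ⟨0, hd⟩ (Lpoly d n hd a k) = Lpoly d n hd a (k - 1) := by
  simp only [eq_expPoly, pderiv_expPoly weight_pos, sum_filter, Fintype.sum_option]
  simp [var, weight, coeff, hk, Fin.ext_iff]

lemma pderiv_coord_of_one_le (hd : 1 ≤ d) (a : ℕ → ℕ → ℝ) (s : Fin d) (hs : 1 ≤ s.val)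
    {k : ℕ} (hk : k ≤ n) :
    pderiv s (Lpoly d n hd a k) = ∑ i ∈ Icc 2 k, a i (s.val + 1) • Lpoly d n hd a (k - i) := by
  set s' : Fin (d - 1) := ⟨s.val - 1, by omega⟩
  have hvar : ∀ t j, var d n hd (some (t, j)) = s ↔ t = s' := by
    intro t j
    simp only [var, Option.elim, Fin.ext_iff, s']
    omega
  rw [sum_Icc_two_eq_sum_fin hk, eq_expPoly, pderiv_expPoly weight_pos, sum_filter,
    Fintype.sum_option, if_neg (by simp [var, Fin.ext_iff]; omega), zero_add,
    Fintype.sum_prod_type, Fintype.sum_eq_single s' fun t ht => by simp [hvar, ht], sum_filter]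
  refine sum_congr rfl fun j _ => ?_
  simp only [hvar, true_and, weight, coeff, Option.elim, eq_expPoly]
  congr 3
  simp [s']
  omega

end Lpoly

/-- The explicit polynomials `L_0, …, L_n` satisfy the derivative
recursions of the breadth-one basis:
(a) `∂L_k/∂x₁ = L_{k-1}` for `1 ≤ k ≤ n`;
(b) `∂L_k/∂x_s = ∑_{i=2}^k a_{i,s} L_{k-i}` for `2 ≤ s ≤ d` and `0 ≤ k ≤ n`
(the coordinate `s : Fin d` with `1 ≤ s.val` represents the variable `x_{s.val+1}`). -/
theorem Lpoly_pderiv_recursions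
    (d n : ℕ) (hd : 2 ≤ d) (a : ℕ → ℕ → ℝ) :
    (∀ k : ℕ, 1 ≤ k → k ≤ n →
      MvPolynomial.pderiv (⟨0, by omega⟩ : Fin d) (Lpoly d n (by omega) a k)
        = Lpoly d n (by omega) a (k - 1)) ∧
    (∀ s : Fin d, 1 ≤ s.val → ∀ k : ℕ, k ≤ n →
      MvPolynomial.pderiv s (Lpoly d n (by omega) a k)
        = ∑ i ∈ Finset.Icc 2 k, a i (s.val + 1) • Lpoly d n (by omega) a (k - i)) :=
  ⟨fun _ hk _ => Lpoly.pderiv_coord_zero _ a hk,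
    fun s hs _ hk => Lpoly.pderiv_coord_of_one_le _ a s hs hk⟩
end
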